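/- arXiv:1704.08815 — 6 statements merged into one kernel-verified Lean document; each statement's English description precedes it below -/
import Mathlib

section
/- Suppose for each i with 0 ≤ i ≤ s−1 we are given 𝔭_i ∈ M such that (𝔭_i)_j = 0 for all j < i and ⟨(𝔭_i)_i⟩ = I_i (the i-th coordinate of 𝔭_i generates the ideal I_i of S). Then M is generated as an S-module by {𝔭_0, 𝔭_1, …, 𝔭_{s−1}}; that is, every f ∈ M can be written as f = Σ_{i=0}^{s−1} q_i·𝔭_i with q_0, …, q_{s−1} ∈ S. -/
set_option synthInstance.maxHeartbeats 1000000
set_option maxHeartbeats 1000000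

open Polynomial

/-- `S = F[y]/(y^ℓ - 1)`. -/
abbrev CyclicQuot (F : Type*) [Field F] (ℓ : ℕ) : Type _ :=
  F[X] ⧸ Ideal.span {(X : F[X]) ^ ℓ - 1}

/-- The set `I_i = { g ∈ S : ∃ v ∈ M, v_i = g and v_j = 0 for all j < i }`. -/
def sectionSet {F : Type*} [Field F] {s ℓ : ℕ}
    (M : Submodule (CyclicQuot F ℓ) (Fin s → CyclicQuot F ℓ)) (i : Fin s) :
    Set (CyclicQuot F ℓ) :=
  {g | ∃ v ∈ M, v i = g ∧ ∀ j < i, v j = 0}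

/-- if, for each `i`, `𝔭 i ∈ M` vanishes in coordinates `< i` and its `i`-th
coordinate generates `I_i`, then every element of `M` is an `S`-linear combination of the
`𝔭 i`, i.e. `{𝔭_0, …, 𝔭_{s-1}}` generates `M` as an `S`-module. -/
theorem generating_set (F : Type*) [Field F] [Fintype F] (s ℓ : ℕ)
    (hs : 0 < s) (hℓ : 0 < ℓ)
    (M : Submodule (CyclicQuot F ℓ) (Fin s → CyclicQuot F ℓ))
    (𝔭 : Fin s → Fin s → CyclicQuot F ℓ) (h𝔭M : ∀ i, 𝔭 i ∈ M)
    (h𝔭0 : ∀ i, ∀ j < i, 𝔭 i j = 0)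
    (h𝔭gen : ∀ i, (Ideal.span {𝔭 i i} : Set (CyclicQuot F ℓ)) = sectionSet M i) :
    ∀ f ∈ M, ∃ q : Fin s → CyclicQuot F ℓ, f = ∑ i : Fin s, q i • 𝔭 i := by
  have key : ∀ d : ℕ, ∀ f ∈ M, (∀ j : Fin s, (j : ℕ) < s - d → f j = 0) →
      ∃ q : Fin s → CyclicQuot F ℓ, f = ∑ i : Fin s, q i • 𝔭 i := by
    intro d
    induction d with
    | zero =>
      intro f hf hvan
      refine ⟨0, ?_⟩
      have : f = 0 := funext fun j => hvan j (by simp only [Nat.sub_zero]; exact j.isLt)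
      rw [this]
      exact (Finset.sum_eq_zero fun i _ => zero_smul (CyclicQuot F ℓ) (𝔭 i)).symm
    | succ d ih =>
      intro f hf hvan
      by_cases hd : s - (d + 1) < s
      · set k : Fin s := ⟨s - (d + 1), hd⟩ with hk
        have hmem : f k ∈ sectionSet M k :=
          ⟨f, hf, rfl, fun j hj => hvan j hj⟩
        rw [← h𝔭gen k] at hmem
        obtain ⟨a, ha⟩ := Ideal.mem_span_singleton'.mp hmem
        have hgM : f - a • 𝔭 k ∈ M := M.sub_mem hf (M.smul_mem a (h𝔭M k))
        have hgvan : ∀ j : Fin s, (j : ℕ) < s - d → (f - a • 𝔭 k) j = 0 := by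
          intro j hj
          rcases Nat.lt_or_ge (j : ℕ) (s - (d + 1)) with h | h'
          · have h1 : f j = 0 := hvan j h
            have h2 : 𝔭 k j = 0 := h𝔭0 k j h
            simp [h1, h2]
          · have hjk : j = k := Fin.ext (by simp only [hk]; omega)
            subst hjk
            simp [smul_eq_mul, ha]
        obtain ⟨q, hq⟩ := ih (f - a • 𝔭 k) hgM hgvan
        refine ⟨fun i => q i + if i = k then a else 0, ?_⟩
        have h2 : ∑ i : Fin s, (if i = k then a else 0) • 𝔭 i = a • 𝔭 k := by
          rw [Finset.sum_eq_single k]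
          · simp
          · intro b _ hb; rw [if_neg hb]; exact zero_smul (CyclicQuot F ℓ) (𝔭 b)
          · intro hb; exact absurd (Finset.mem_univ k) hb
        simp only [add_smul, Finset.sum_add_distrib, h2, ← hq]
        abel
      · exact ih f hf (fun j hj => hvan j (by omega))
  intro f hf
  exact key s f hf (fun j hj => by omega)
end

section
/- Suppose for each i with 0 ≤ i ≤ s−1 we are given 𝔭_i ∈ M such that (𝔭_i)_j = 0 for all j < i and ⟨(𝔭_i)_i⟩ = I_i (the i-th coordinate of 𝔭_i generates the ideal I_i of S). Then for every index k with 0 ≤ k ≤ s−1 and every f ∈ M with f_j = 0 for all j < k, the element f lies in the S-module generated by {𝔭_k, 𝔭_{k+1}, …, 𝔭_{s−1}}. -/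
set_option synthInstance.maxHeartbeats 1000000
set_option maxHeartbeats 2000000

open Polynomial

/-- if, for each `i`, `𝔭 i ∈ M` vanishes in coordinates `< i` and its `i`-th
coordinate generates `I_i`, then every `f ∈ M` vanishing in coordinates `< k` lies in the
`S`-submodule generated by `𝔭_k, 𝔭_{k+1}, …, 𝔭_{s-1}`. -/
theorem partial_generating_set (F : Type*) [Field F] [Fintype F] (s ℓ : ℕ)
    (hs : 0 < s) (hℓ : 0 < ℓ)
    (M : Submodule (CyclicQuot F ℓ) (Fin s → CyclicQuot F ℓ))
    (𝔭 : Fin s → Fin s → CyclicQuot F ℓ) (h𝔭M : ∀ i, 𝔭 i ∈ M)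
    (h𝔭0 : ∀ i, ∀ j < i, 𝔭 i j = 0)
    (h𝔭gen : ∀ i, (Ideal.span {𝔭 i i} : Set (CyclicQuot F ℓ)) = sectionSet M i) :
    ∀ k : Fin s, ∀ f ∈ M, (∀ j < k, f j = 0) →
      f ∈ Submodule.span (CyclicQuot F ℓ) (𝔭 '' {i : Fin s | k ≤ i}) := by
  suffices H : ∀ m : ℕ, ∀ k : Fin s, s - (k : ℕ) ≤ m → ∀ f ∈ M, (∀ j < k, f j = 0) →
      f ∈ Submodule.span (CyclicQuot F ℓ) (𝔭 '' {i : Fin s | k ≤ i}) by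
    intro k f hf h0
    exact H (s - k) k le_rfl f hf h0
  intro m
  induction m with
  | zero =>
    intro k hk
    exact absurd hk (by have := k.isLt; omega)
  | succ m ih =>
    intro k hk f hf h0
    have hfk : f k ∈ Ideal.span {𝔭 k k} := by
      have h := h𝔭gen k
      have : f k ∈ (Ideal.span {𝔭 k k} : Set (CyclicQuot F ℓ)) := by
        rw [h]; exact ⟨f, hf, rfl, h0⟩
      exact this
    obtain ⟨c, hc⟩ := Ideal.mem_span_singleton'.mp hfk
    have hpk_mem : 𝔭 k ∈ 𝔭 '' {i : Fin s | k ≤ i} := ⟨k, le_refl k, rfl⟩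
    set g := f - c • 𝔭 k with hg
    have hgM : g ∈ M := M.sub_mem hf (M.smul_mem c (h𝔭M k))
    have hg0 : ∀ j ≤ k, g j = 0 := by
      intro j hj
      rcases lt_or_eq_of_le hj with h | h
      · simp [hg, h0 j h, h𝔭0 k j h]
      · subst h; simp [hg, ← hc]
    by_cases hlast : (k : ℕ) + 1 < s
    · set k' : Fin s := ⟨(k : ℕ) + 1, hlast⟩ with hk'
      have hg0' : ∀ j < k', g j = 0 := by
        intro j hj
        exact hg0 j (by rw [Fin.le_def]; rw [Fin.lt_def] at hj; simp [hk'] at hj; omega)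
      have hspan := ih k' (by simp [hk']; omega) g hgM hg0'
      have hsub : (𝔭 '' {i : Fin s | k' ≤ i}) ⊆ 𝔭 '' {i : Fin s | k ≤ i} := by
        apply Set.image_mono
        intro i hi
        simp only [Set.mem_setOf_eq] at hi ⊢
        rw [Fin.le_def] at hi ⊢
        simp [hk'] at hi
        omega
      have hg_span := Submodule.span_mono hsub hspan
      have hfeq : f = g + c • 𝔭 k := by rw [hg, sub_add_cancel]
      rw [hfeq]
      exact Submodule.add_mem _ hg_span
        (Submodule.smul_mem _ c (Submodule.subset_span hpk_mem))
    · have hgz : g = 0 := by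
        funext j
        exact hg0 j (by rw [Fin.le_def]; have := j.isLt; omega)
      have hfeq : f = c • 𝔭 k := sub_eq_zero.mp (hg ▸ hgz)
      rw [hfeq]
      exact Submodule.smul_mem _ c (Submodule.subset_span hpk_mem)
end

section
/- Suppose for each i with 0 ≤ i ≤ s−1 we are given 𝔭_i ∈ M such that (𝔭_i)_j = 0 for all j < i, and such that (𝔭_i)_i is the image in S of a monic polynomial p_i ∈ F[y] of degree a_i with p_i dividing y^ℓ − 1. If l_0, …, l_{s−1} ∈ F[y] are polynomials with deg(l_i) < ℓ − a_i (or l_i = 0) for each i, and Σ_{i=0}^{s−1} l_i(ȳ)·𝔭_i = 0 in S^s (where ȳ is the image of y in S), then l_i = 0 for every i. Consequently the family { ȳ^k·𝔭_i : 0 ≤ i ≤ s−1, 0 ≤ k ≤ ℓ − a_i − 1 } is linearly independent over F. -/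
set_option synthInstance.maxHeartbeats 1000000
set_option maxHeartbeats 2000000

open Polynomial

/-- The quotient map `F[y] → S`. -/
noncomputable def qmk (F : Type*) [Field F] (ℓ : ℕ) : F[X] →+* CyclicQuot F ℓ :=
  Ideal.Quotient.mk _

/-- Key cancellation lemma: if `l·p ≡ 0 mod (X^ℓ - 1)`, `p` a monic divisor of
`X^ℓ - 1` of degree `a`, and `deg l < ℓ - a`, then `l = 0`. -/
theorem key_lemma (F : Type*) [Field F] (ℓ : ℕ) (hℓ : 0 < ℓ)
    (p l : F[X]) (a : ℕ) (hmonic : p.Monic) (hdeg : p.natDegree = a)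
    (hdvd : p ∣ (X : F[X]) ^ ℓ - 1)
    (hldeg : l.degree < ((ℓ - a : ℕ) : WithBot ℕ))
    (h0 : qmk F ℓ (l * p) = 0) : l = 0 := by
  obtain ⟨q, hq⟩ := hdvd
  have hXdeg : ((X : F[X]) ^ ℓ - 1).natDegree = ℓ := by
    simpa using Polynomial.natDegree_X_pow_sub_C (R := F) (n := ℓ) (r := 1)
  have hXl : ((X : F[X]) ^ ℓ - 1) ≠ 0 := by
    simpa using Polynomial.X_pow_sub_C_ne_zero hℓ (1 : F)
  have hp0 : p ≠ 0 := hmonic.ne_zero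
  have hq0 : q ≠ 0 := by rintro rfl; simp at hq; exact hXl hq
  have hmem : ((X : F[X]) ^ ℓ - 1) ∣ l * p := by
    have := (Ideal.Quotient.eq_zero_iff_mem).mp h0
    exact (Ideal.mem_span_singleton).mp this
  have hqdvd : q ∣ l := by
    have h1 : p * q ∣ p * l := by
      rw [← hq]; rw [mul_comm p l]; exact hmem
    exact (mul_dvd_mul_iff_left hp0).mp h1
  by_contra hl0
  have hl0' : l ≠ 0 := hl0
  have hqdeg : q.natDegree = ℓ - a := by
    have h2 : ((X : F[X]) ^ ℓ - 1).natDegree = p.natDegree + q.natDegree := by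
      rw [hq]; exact Polynomial.natDegree_mul hp0 hq0
    omega
  have hge : (q.natDegree : WithBot ℕ) ≤ l.degree := by
    rw [← Polynomial.degree_eq_natDegree hq0]
    exact Polynomial.degree_le_of_dvd hqdvd hl0'
  rw [hqdeg] at hge
  exact absurd (lt_of_le_of_lt hge hldeg) (lt_irrefl _)

/-- suppose each `𝔭 i ∈ M` vanishes in coordinates `< i` and its `i`-th
coordinate is the image of a monic divisor `p i` of `y^ℓ - 1` of degree `a i`.  If
`l_0, …, l_{s-1}` are polynomials with `deg (l i) < ℓ - a i` (the zero polynomial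
included) and `Σ_i l_i(ȳ) • 𝔭_i = 0`, then all `l i = 0`; consequently the family
`{ ȳ^k • 𝔭_i : 0 ≤ k ≤ ℓ - a_i - 1 }` is linearly independent over `F`. -/
theorem generators_linearIndependent (F : Type*) [Field F] [Fintype F] (s ℓ : ℕ)
    (hs : 0 < s) (hℓ : 0 < ℓ)
    (M : Submodule (CyclicQuot F ℓ) (Fin s → CyclicQuot F ℓ))
    (𝔭 : Fin s → Fin s → CyclicQuot F ℓ) (h𝔭M : ∀ i, 𝔭 i ∈ M)
    (h𝔭0 : ∀ i, ∀ j < i, 𝔭 i j = 0)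
    (p : Fin s → F[X]) (a : Fin s → ℕ)
    (hmonic : ∀ i, (p i).Monic) (hdeg : ∀ i, (p i).natDegree = a i)
    (hdvd : ∀ i, p i ∣ (X : F[X]) ^ ℓ - 1)
    (hdiag : ∀ i, 𝔭 i i = qmk F ℓ (p i)) :
    (∀ l : Fin s → F[X],
        (∀ i, (l i).degree < ((ℓ - a i : ℕ) : WithBot ℕ)) →
        ∑ i : Fin s, qmk F ℓ (l i) • 𝔭 i = 0 → ∀ i, l i = 0) ∧
      LinearIndependent F
        (fun ik : (i : Fin s) × Fin (ℓ - a i) =>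
          (qmk F ℓ X ^ (ik.2 : ℕ)) • 𝔭 ik.1) := by
  have part1 : ∀ l : Fin s → F[X],
      (∀ i, (l i).degree < ((ℓ - a i : ℕ) : WithBot ℕ)) →
      ∑ i : Fin s, qmk F ℓ (l i) • 𝔭 i = 0 → ∀ i, l i = 0 := by
    intro l hldeg hsum
    have key : ∀ n : ℕ, ∀ i : Fin s, (i : ℕ) = n → l i = 0 := by
      intro n
      induction n using Nat.strong_induction_on with
      | _ n IHn =>
      intro i hin
      have IH : ∀ j : Fin s, j < i → l j = 0 := fun j hj =>
        IHn (j : ℕ) (hin ▸ hj) j rfl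
      -- coordinate i of the sum
      have hcoord : ∑ j : Fin s, qmk F ℓ (l j) * 𝔭 j i = 0 := by
        have := congrFun hsum i
        simpa using this
      have hsingle : ∑ j : Fin s, qmk F ℓ (l j) * 𝔭 j i
          = qmk F ℓ (l i) * 𝔭 i i := by
        apply Finset.sum_eq_single i
        · intro j _ hji
          rcases lt_or_gt_of_ne hji with hlt | hgt
          · rw [IH j hlt]; simp [qmk]
          · rw [h𝔭0 j i hgt, mul_zero]
        · intro h; exact absurd (Finset.mem_univ i) h
      rw [hsingle, hdiag i, ← map_mul] at hcoord
      exact key_lemma F ℓ hℓ (p i) (l i) (a i) (hmonic i) (hdeg i) (hdvd i)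
        (hldeg i) hcoord
    exact fun i => key (i : ℕ) i rfl
  refine ⟨part1, ?_⟩
  rw [Fintype.linearIndependent_iff]
  intro g hg ik
  set l : Fin s → F[X] := fun i => ∑ k : Fin (ℓ - a i), C (g ⟨i, k⟩) * X ^ (k : ℕ)
    with hl
  have hldeg : ∀ i, (l i).degree < ((ℓ - a i : ℕ) : WithBot ℕ) := by
    intro i
    apply lt_of_le_of_lt (Polynomial.degree_sum_le _ _)
    rw [Finset.sup_lt_iff (by exact_mod_cast WithBot.bot_lt_coe _)]
    intro k _
    exact lt_of_le_of_lt (Polynomial.degree_C_mul_X_pow_le _ _)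
      (by exact_mod_cast k.isLt)
  have hqml : ∀ i, qmk F ℓ (l i) • 𝔭 i
      = ∑ k : Fin (ℓ - a i), g ⟨i, k⟩ • ((qmk F ℓ X ^ (k : ℕ)) • 𝔭 i) := by
    intro i
    rw [hl]
    rw [map_sum, Finset.sum_smul]
    apply Finset.sum_congr rfl
    intro k _
    rw [map_mul, map_pow]
    have hC : qmk F ℓ (C (g ⟨i, k⟩)) = algebraMap F (CyclicQuot F ℓ) (g ⟨i, k⟩) := by
      simpa [qmk, Polynomial.algebraMap_eq] using
        Ideal.Quotient.mk_algebraMap (R₁ := F)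
          (Ideal.span {(X : F[X]) ^ ℓ - 1}) (g ⟨i, k⟩)
    rw [hC, mul_smul, algebraMap_smul]
  have hsum : ∑ i : Fin s, qmk F ℓ (l i) • 𝔭 i = 0 := by
    rw [← hg]
    conv_rhs => rw [← Finset.univ_sigma_univ, Finset.sum_sigma]
    exact Finset.sum_congr rfl fun i _ => hqml i
  have hl0 := part1 l hldeg hsum ik.1
  have : (l ik.1).coeff (ik.2 : ℕ) = g ik := by
    rw [hl]
    simp only [Polynomial.finset_sum_coeff, Polynomial.coeff_C_mul,
      Polynomial.coeff_X_pow]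
    rw [Finset.sum_eq_single ik.2]
    · simp
    · intro b _ hb
      have hne : (b : ℕ) ≠ (ik.2 : ℕ) := fun h => hb (Fin.ext h)
      rw [if_neg (fun h => hne h.symm), mul_zero]
    · intro h; exact absurd (Finset.mem_univ _) h
  rw [hl0] at this
  simpa using this.symm
end

section
/- Suppose for each i with 0 ≤ i ≤ s−1 we are given 𝔭_i ∈ M such that (𝔭_i)_j = 0 for all j < i, the i-th coordinate (𝔭_i)_i generates the ideal I_i of S, and (𝔭_i)_i is the image in S of a monic polynomial p_i ∈ F[y] of degree a_i with p_i dividing y^ℓ − 1. Then M, regarded as an F-vector space, is spanned by the family { ȳ^k·𝔭_i : 0 ≤ i ≤ s−1, 0 ≤ k ≤ ℓ − a_i − 1 }, where ȳ is the image of y in S. -/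
set_option synthInstance.maxHeartbeats 1000000
set_option maxHeartbeats 2000000

open Polynomial

/-- suppose each `𝔭 i ∈ M` vanishes in coordinates `< i` and its `i`-th
coordinate generates `I_i` and is the image of a monic divisor `p i` of `y^ℓ - 1` of
degree `a i`.  Then, as an `F`-vector space, `M` is spanned by the family
`{ ȳ^k • 𝔭_i : 0 ≤ i ≤ s-1, 0 ≤ k ≤ ℓ - a_i - 1 }`. -/
theorem generators_span (F : Type*) [Field F] [Fintype F] (s ℓ : ℕ)
    (hs : 0 < s) (hℓ : 0 < ℓ)
    (M : Submodule (CyclicQuot F ℓ) (Fin s → CyclicQuot F ℓ))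
    (𝔭 : Fin s → Fin s → CyclicQuot F ℓ) (h𝔭M : ∀ i, 𝔭 i ∈ M)
    (h𝔭0 : ∀ i, ∀ j < i, 𝔭 i j = 0)
    (h𝔭gen : ∀ i, (Ideal.span {𝔭 i i} : Set (CyclicQuot F ℓ)) = sectionSet M i)
    (p : Fin s → F[X]) (a : Fin s → ℕ)
    (hmonic : ∀ i, (p i).Monic) (hdeg : ∀ i, (p i).natDegree = a i)
    (hdvd : ∀ i, p i ∣ (X : F[X]) ^ ℓ - 1)
    (hdiag : ∀ i, 𝔭 i i = qmk F ℓ (p i)) :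
    Submodule.span F
        (Set.range fun ik : (i : Fin s) × Fin (ℓ - a i) =>
          (qmk F ℓ X ^ (ik.2 : ℕ)) • 𝔭 ik.1) =
      M.restrictScalars F := by
  have hXmonic : ((X : F[X]) ^ ℓ - 1).Monic := by
    simpa using monic_X_pow_sub_C (1 : F) hℓ.ne'
  have hXdeg : ((X : F[X]) ^ ℓ - 1).natDegree = ℓ := by
    have := natDegree_X_pow_sub_C (n := ℓ) (r := (1 : F))
    simpa using this
  have hXzero : qmk F ℓ ((X : F[X]) ^ ℓ - 1) = 0 :=
    Ideal.Quotient.eq_zero_iff_mem.mpr (Ideal.subset_span rfl)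
  apply le_antisymm
  · rw [Submodule.span_le]
    rintro _ ⟨⟨i, k⟩, rfl⟩
    exact M.smul_mem _ (h𝔭M i)
  · have key : ∀ k n, n + k = s → ∀ v ∈ M,
        (∀ j : Fin s, (j : ℕ) < n → v j = 0) →
        v ∈ Submodule.span F
          (Set.range fun ik : (i : Fin s) × Fin (ℓ - a i) =>
            (qmk F ℓ X ^ (ik.2 : ℕ)) • 𝔭 ik.1) := by
      intro k
      induction k with
      | zero =>
        intro n hn v _ hv0
        have : v = 0 := funext fun j => hv0 j (by omega)
        rw [this]; exact Submodule.zero_mem _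
      | succ k IH =>
        intro n hn v hvM hv0
        set i : Fin s := ⟨n, by omega⟩ with hi
        have hvi : v i ∈ Ideal.span {𝔭 i i} := by
          have : v i ∈ (Ideal.span {𝔭 i i} : Set (CyclicQuot F ℓ)) := by
            rw [h𝔭gen i]
            exact ⟨v, hvM, rfl, fun j hj => hv0 j hj⟩
          exact this
        obtain ⟨g, hg⟩ := Ideal.mem_span_singleton'.mp hvi
        obtain ⟨G, hG⟩ := Ideal.Quotient.mk_surjective g
        have hG' : qmk F ℓ G = g := hG
        obtain ⟨c, hc⟩ := hdvd i
        have hcm : c.Monic := (hmonic i).of_mul_monic_left (hc ▸ hXmonic)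
        have h1 : a i + c.natDegree = ℓ := by
          have h2 : ((p i) * c).natDegree = (p i).natDegree + c.natDegree :=
            (hmonic i).natDegree_mul hcm
          rw [← hc, hXdeg, hdeg i] at h2
          omega
        have hcdeg : c.natDegree = ℓ - a i := by omega
        set u : Fin s → CyclicQuot F ℓ :=
          v - qmk F ℓ G • 𝔭 i + qmk F ℓ (c * (G /ₘ c)) • 𝔭 i with hu
        have huM : u ∈ M :=
          M.add_mem (M.sub_mem hvM (M.smul_mem _ (h𝔭M i))) (M.smul_mem _ (h𝔭M i))
        have hu0 : ∀ j : Fin s, (j : ℕ) < n + 1 → u j = 0 := by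
          intro j hj
          rcases Nat.lt_or_ge (j : ℕ) n with hlt | hge
          · have h2 : v j = 0 := hv0 j hlt
            have h3 : 𝔭 i j = 0 := h𝔭0 i j hlt
            simp [hu, h2, h3]
          · have hjn : (j : ℕ) = n := by omega
            have hji : j = i := by
              apply Fin.ext
              rw [hi]
              exact hjn
            rw [hji]
            simp only [hu, Pi.add_apply, Pi.sub_apply, Pi.smul_apply, smul_eq_mul]
            have hzero : qmk F ℓ (c * (G /ₘ c)) * 𝔭 i i = 0 := by
              rw [hdiag i, ← map_mul]
              have he : c * (G /ₘ c) * p i = G /ₘ c * ((X : F[X]) ^ ℓ - 1) := by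
                rw [hc]; ring
              rw [he, map_mul, hXzero, mul_zero]
            rw [hG', hg, hzero]
            ring
        have huspan := IH (n + 1) (by omega) u huM hu0
        set r : F[X] := G %ₘ c with hr
        have hGsum : qmk F ℓ r + qmk F ℓ (c * (G /ₘ c)) = qmk F ℓ G := by
          rw [← map_add, modByMonic_add_div G c]
        have hveq : v = qmk F ℓ r • 𝔭 i + u := by
          funext j
          simp only [hu, Pi.add_apply, Pi.sub_apply, Pi.smul_apply, smul_eq_mul]
          rw [← hGsum]
          ring
        rw [hveq]
        refine Submodule.add_mem _ ?_ huspan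
        rcases eq_or_ne r 0 with hr0 | hr0
        · have h0 : qmk F ℓ (0 : F[X]) • 𝔭 i = 0 := by
            funext j
            simp
          rw [hr0, h0]
          exact Submodule.zero_mem _
        · have hrdeg : r.natDegree < ℓ - a i := by
            rw [← hcdeg]
            exact natDegree_lt_natDegree hr0 (degree_modByMonic_lt G hcm)
          have hrsum : qmk F ℓ r • 𝔭 i
              = ∑ m ∈ Finset.range (ℓ - a i),
                  r.coeff m • ((qmk F ℓ X ^ m) • 𝔭 i) := by
            funext j
            simp only [Finset.sum_apply, Pi.smul_apply, smul_eq_mul,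
              Algebra.smul_def]
            conv_lhs => rw [r.as_sum_range' (ℓ - a i) hrdeg]
            rw [map_sum, Finset.sum_mul]
            refine Finset.sum_congr rfl fun m _ => ?_
            rw [← C_mul_X_pow_eq_monomial, map_mul, map_pow, mul_assoc]
            exact (Algebra.smul_def (r.coeff m) ((qmk F ℓ) X ^ m * 𝔭 i j)).symm
          rw [hrsum]
          refine Submodule.sum_mem _ fun m hm => Submodule.smul_mem _ _ ?_
          exact Submodule.subset_span
            ⟨⟨i, ⟨m, Finset.mem_range.mp hm⟩⟩, rfl⟩
    intro v hv
    exact key s 0 (by omega) v hv (fun j hj => absurd hj (by omega))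
end

section
/- Suppose for each i with 0 ≤ i ≤ s−1 we are given 𝔭_i ∈ M such that (𝔭_i)_j = 0 for all j < i, the i-th coordinate (𝔭_i)_i generates the ideal I_i of S, and (𝔭_i)_i is the image in S of a monic polynomial p_i ∈ F[y] of degree a_i with p_i dividing y^ℓ − 1. Then the family { ȳ^k·𝔭_i : 0 ≤ i ≤ s−1, 0 ≤ k ≤ ℓ − a_i − 1 } (where ȳ is the image of y in S) is a basis of M as an F-vector space. -/
set_option synthInstance.maxHeartbeats 1000000

open Polynomial

namespace GB
section Aux
variable {F : Type*} [Field F] {ℓ : ℕ}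

lemma qmk_top_zero (F : Type*) [Field F] (ℓ : ℕ) :
    qmk F ℓ ((X : F[X]) ^ ℓ - 1) = 0 :=
  Ideal.Quotient.eq_zero_iff_mem.mpr (Ideal.subset_span rfl)

lemma monic_Xl (F : Type*) [Field F] {ℓ : ℕ} (hℓ : 0 < ℓ) :
    ((X : F[X]) ^ ℓ - 1).Monic := by
  simpa using monic_X_pow_sub_C (1 : F) hℓ.ne'

lemma natDegree_Xl (F : Type*) [Field F] {ℓ : ℕ} (hℓ : 0 < ℓ) :
    ((X : F[X]) ^ ℓ - 1).natDegree = ℓ := by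
  have : ((X : F[X]) ^ ℓ - C 1).natDegree = ℓ := by
    rw [natDegree_X_pow_sub_C]
  simpa using this

lemma small_rep (hℓ : 0 < ℓ) {p : F[X]} (hm : p.Monic) (hd : p ∣ (X : F[X]) ^ ℓ - 1)
    (g : CyclicQuot F ℓ) :
    ∃ r : F[X], r.degree < ((ℓ - p.natDegree : ℕ) : WithBot ℕ) ∧
      g * qmk F ℓ p = qmk F ℓ r * qmk F ℓ p := by
  obtain ⟨c, hc⟩ := hd
  have hcm : c.Monic := hm.of_mul_monic_left (hc ▸ monic_Xl F hℓ)
  have hdegc : c.natDegree = ℓ - p.natDegree := by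
    have h1 : p.natDegree + c.natDegree = ℓ := by
      have := hm.natDegree_mul hcm
      rw [← hc, natDegree_Xl F hℓ] at this
      omega
    omega
  obtain ⟨h, rfl⟩ := Ideal.Quotient.mk_surjective g
  refine ⟨h %ₘ c, ?_, ?_⟩
  · rw [← hdegc, ← degree_eq_natDegree hcm.ne_zero]
    exact degree_modByMonic_lt h hcm
  · have key : qmk F ℓ (c * (h /ₘ c)) * qmk F ℓ p = 0 := by
      rw [← map_mul]
      have : c * (h /ₘ c) * p = (h /ₘ c) * ((X : F[X]) ^ ℓ - 1) := by rw [hc]; ring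
      rw [this, map_mul, qmk_top_zero, mul_zero]
    show Ideal.Quotient.mk _ h * _ = _
    conv_lhs => rw [← modByMonic_add_div h c]
    rw [show (Ideal.Quotient.mk (Ideal.span {(X : F[X]) ^ ℓ - 1})) (h %ₘ c + c * (h /ₘ c))
        = qmk F ℓ (h %ₘ c) + qmk F ℓ (c * (h /ₘ c)) from map_add _ _ _, add_mul, key, add_zero]

lemma small_zero (hℓ : 0 < ℓ) {p : F[X]} (hm : p.Monic) (hd : p ∣ (X : F[X]) ^ ℓ - 1)
    {r : F[X]} (hr : r.degree < ((ℓ - p.natDegree : ℕ) : WithBot ℕ))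
    (h0 : qmk F ℓ r * qmk F ℓ p = 0) : r = 0 := by
  rcases eq_or_ne r 0 with rfl | hr0
  · rfl
  have hX0 : ((X : F[X]) ^ ℓ - 1) ≠ 0 := (monic_Xl F hℓ).ne_zero
  have hdvd2 : ((X : F[X]) ^ ℓ - 1) ∣ r * p := by
    rw [← map_mul] at h0
    exact (Ideal.mem_span_singleton).mp (Ideal.Quotient.eq_zero_iff_mem.mp h0)
  have hale : p.natDegree ≤ ℓ := by
    have := natDegree_le_of_dvd hd hX0
    rwa [natDegree_Xl F hℓ] at this
  have hrn : r.natDegree < ℓ - p.natDegree := (natDegree_lt_iff_degree_lt hr0).mpr hr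
  have hrp0 : r * p ≠ 0 := mul_ne_zero hr0 hm.ne_zero
  have hdeglt : (r * p).degree < ((X : F[X]) ^ ℓ - 1).degree := by
    rw [degree_eq_natDegree hrp0, degree_eq_natDegree hX0, natDegree_Xl F hℓ,
      natDegree_mul hr0 hm.ne_zero]
    exact_mod_cast (by omega : r.natDegree + p.natDegree < ℓ)
  exact absurd (eq_zero_of_dvd_of_degree_lt hdvd2 hdeglt) hrp0

lemma sum_rep {n : ℕ} {r : F[X]} (hr : r.degree < (n : WithBot ℕ)) :
    r = ∑ k ∈ Finset.range n, C (r.coeff k) * X ^ k := by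
  rcases eq_or_ne r 0 with rfl | h0
  · simp
  · have := r.as_sum_range' n ((natDegree_lt_iff_degree_lt h0).mpr hr)
    simpa [C_mul_X_pow_eq_monomial] using this

lemma deg_fin_sum {n : ℕ} (c : Fin n → F) :
    (∑ k : Fin n, C (c k) * X ^ (k : ℕ)).degree < (n : WithBot ℕ) := by
  refine lt_of_le_of_lt (degree_sum_le _ _) ?_
  rw [Finset.sup_lt_iff (by exact WithBot.bot_lt_coe n)]
  intro k _
  exact lt_of_le_of_lt (degree_C_mul_X_pow_le _ _) (by exact_mod_cast k.isLt)

lemma coeff_fin_sum {n : ℕ} (c : Fin n → F) (j : Fin n) :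
    (∑ k : Fin n, C (c k) * X ^ (k : ℕ)).coeff (j : ℕ) = c j := by
  rw [finset_sum_coeff]
  rw [Finset.sum_eq_single j]
  · simp [coeff_C_mul_X_pow]
  · intro k _ hk
    rw [coeff_C_mul_X_pow]
    simp [Fin.val_eq_val, hk.symm]
  · simp

lemma qmk_C_smul {s : ℕ} (b : F) (w : Fin s → CyclicQuot F ℓ) :
    qmk F ℓ (C b) • w = b • w := by
  have h : qmk F ℓ (C b) = algebraMap F (CyclicQuot F ℓ) b := rfl
  rw [h, algebraMap_smul]

end Aux
end GB

set_option maxHeartbeats 2000000 in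
/-- suppose each `𝔭 i ∈ M` vanishes in coordinates `< i` and its `i`-th
coordinate generates `I_i` and is the image of a monic divisor `p i` of `y^ℓ - 1` of
degree `a i`.  Then the family `{ ȳ^k • 𝔭_i : 0 ≤ i ≤ s-1, 0 ≤ k ≤ ℓ - a_i - 1 }`
is a basis of `M` as an `F`-vector space: it is `F`-linearly independent and its
`F`-span is `M`. -/
theorem generators_basis (F : Type*) [Field F] [Fintype F] (s ℓ : ℕ)
    (hs : 0 < s) (hℓ : 0 < ℓ)
    (M : Submodule (CyclicQuot F ℓ) (Fin s → CyclicQuot F ℓ))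
    (𝔭 : Fin s → Fin s → CyclicQuot F ℓ) (h𝔭M : ∀ i, 𝔭 i ∈ M)
    (h𝔭0 : ∀ i, ∀ j < i, 𝔭 i j = 0)
    (h𝔭gen : ∀ i, (Ideal.span {𝔭 i i} : Set (CyclicQuot F ℓ)) = sectionSet M i)
    (p : Fin s → F[X]) (a : Fin s → ℕ)
    (hmonic : ∀ i, (p i).Monic) (hdeg : ∀ i, (p i).natDegree = a i)
    (hdvd : ∀ i, p i ∣ (X : F[X]) ^ ℓ - 1)
    (hdiag : ∀ i, 𝔭 i i = qmk F ℓ (p i)) :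
    LinearIndependent F
        (fun ik : (i : Fin s) × Fin (ℓ - a i) =>
          (qmk F ℓ X ^ (ik.2 : ℕ)) • 𝔭 ik.1) ∧
      Submodule.span F
          (Set.range fun ik : (i : Fin s) × Fin (ℓ - a i) =>
            (qmk F ℓ X ^ (ik.2 : ℕ)) • 𝔭 ik.1) =
        M.restrictScalars F := by
  constructor
  · -- linear independence
    rw [Fintype.linearIndependent_iff]
    intro c hc
    set f : (i : Fin s) → F[X] :=
      fun i => ∑ k : Fin (ℓ - a i), C (c ⟨i, k⟩) * X ^ (k : ℕ) with hf_def
    have hsum : ∑ i, qmk F ℓ (f i) • 𝔭 i = 0 := by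
      rw [← hc, ← Finset.univ_sigma_univ, Finset.sum_sigma]
      refine Finset.sum_congr rfl fun i _ => ?_
      rw [hf_def, map_sum, Finset.sum_smul]
      refine Finset.sum_congr rfl fun k _ => ?_
      rw [map_mul, map_pow, mul_smul, GB.qmk_C_smul]
    have key : ∀ n : ℕ, ∀ i : Fin s, (i : ℕ) = n → f i = 0 := by
      intro n
      induction n using Nat.strong_induction_on with
      | _ n ih =>
        intro i hi
        have hcoord : ∑ j, qmk F ℓ (f j) * 𝔭 j i = 0 := by
          have := congrFun hsum i
          simpa [Finset.sum_apply, Pi.smul_apply, smul_eq_mul] using this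
        rw [Finset.sum_eq_single i] at hcoord
        · rw [hdiag i] at hcoord
          have hdegf : (f i).degree < ((ℓ - (p i).natDegree : ℕ) : WithBot ℕ) := by
            rw [hdeg i]; exact GB.deg_fin_sum _
          exact GB.small_zero hℓ (hmonic i) (hdvd i) hdegf hcoord
        · intro j _ hj
          rcases lt_or_gt_of_ne hj with hlt | hgt
          · have : f j = 0 := ih (j : ℕ) (by omega) j rfl
            rw [this, map_zero, zero_mul]
          · rw [h𝔭0 j i hgt, mul_zero]
        · intro h; exact absurd (Finset.mem_univ i) h
    have hf0 : ∀ i, f i = 0 := fun i => key (i : ℕ) i rfl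
    rintro ⟨i, k⟩
    have h1 := GB.coeff_fin_sum (fun k' : Fin (ℓ - a i) => c ⟨i, k'⟩) k
    rw [show (∑ k' : Fin (ℓ - a i), C (c ⟨i, k'⟩) * X ^ (k' : ℕ)) = f i from rfl,
      hf0 i, coeff_zero] at h1
    exact h1.symm
  · -- span
    apply le_antisymm
    · rw [Submodule.span_le]
      rintro _ ⟨ik, rfl⟩
      simp only [SetLike.mem_coe, Submodule.restrictScalars_mem]
      exact M.smul_mem _ (h𝔭M ik.1)
    · intro v hv
      simp only [Submodule.restrictScalars_mem] at hv
      have aux : ∀ m n : ℕ, s ≤ n + m → ∀ v, v ∈ M →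
          (∀ j : Fin s, (j : ℕ) < n → v j = 0) →
          v ∈ Submodule.span F
            (Set.range fun ik : (i : Fin s) × Fin (ℓ - a i) =>
              (qmk F ℓ X ^ (ik.2 : ℕ)) • 𝔭 ik.1) := by
        intro m
        induction m with
        | zero =>
          intro n hn v hvM hv0
          have : v = 0 := funext fun j => hv0 j (by omega)
          simp [this]
        | succ m ih =>
          intro n hn v hvM hv0
          by_cases hns : n < s
          · set i : Fin s := ⟨n, hns⟩ with hi_def
            have hvi : v i ∈ sectionSet M i :=
              ⟨v, hvM, rfl, fun j hj => hv0 j hj⟩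
            rw [← h𝔭gen i] at hvi
            obtain ⟨g, hg⟩ := Ideal.mem_span_singleton'.mp hvi
            rw [hdiag i] at hg
            obtain ⟨r, hrdeg, hrep⟩ := GB.small_rep hℓ (hmonic i) (hdvd i) g
            rw [hdeg i] at hrdeg
            set w : Fin s → CyclicQuot F ℓ := v - qmk F ℓ r • 𝔭 i with hw_def
            have hwM : w ∈ M := M.sub_mem hvM (M.smul_mem _ (h𝔭M i))
            have hw0 : ∀ j : Fin s, (j : ℕ) < n + 1 → w j = 0 := by
              intro j hj
              rcases Nat.lt_succ_iff_lt_or_eq.mp hj with hlt | heq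
              · have hji : j < i := hlt
                simp [hw_def, hv0 j hlt, h𝔭0 i j hji]
              · have hji : j = i := Fin.ext heq
                subst hji
                simp only [hw_def, Pi.sub_apply, Pi.smul_apply, smul_eq_mul]
                rw [hdiag i, ← hrep, hg, sub_self]
            have hwspan := ih (n + 1) (by omega) w hwM hw0
            have hsm : qmk F ℓ r • 𝔭 i ∈ Submodule.span F
                (Set.range fun ik : (i : Fin s) × Fin (ℓ - a i) =>
                  (qmk F ℓ X ^ (ik.2 : ℕ)) • 𝔭 ik.1) := by
              rw [GB.sum_rep hrdeg, map_sum, Finset.sum_smul]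
              refine Submodule.sum_mem _ fun k hk => ?_
              rw [map_mul, map_pow, mul_smul, GB.qmk_C_smul]
              exact Submodule.smul_mem _ _
                (Submodule.subset_span ⟨⟨i, ⟨k, Finset.mem_range.mp hk⟩⟩, rfl⟩)
            have hv_eq : v = w + qmk F ℓ r • 𝔭 i := by
              rw [hw_def]; abel
            rw [hv_eq]
            exact Submodule.add_mem _ hwspan hsm
          · exact ih n (by omega) v hvM hv0
      exact aux s 0 (by omega) v hv (fun j hj => absurd hj (Nat.not_lt_zero _))
end

section
/- Suppose for each i with 0 ≤ i ≤ s−1 we are given 𝔭_i ∈ M such that (𝔭_i)_j = 0 for all j < i, the i-th coordinate (𝔭_i)_i generates the ideal I_i of S, and (𝔭_i)_i is the image in S of a monic polynomial p_i ∈ F[y] of degree a_i with p_i dividing y^ℓ − 1. Then the dimension of M as an F-vector space equals Σ_{i=0}^{s−1} (ℓ − a_i). -/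
set_option synthInstance.maxHeartbeats 1000000

open Polynomial

section Aux
variable {F : Type*} [Field F] {ℓ : ℕ}

lemma qmk_eq_zero_iff (f : F[X]) : qmk F ℓ f = 0 ↔ ((X : F[X]) ^ ℓ - 1) ∣ f := by
  rw [qmk, Ideal.Quotient.eq_zero_iff_mem, Ideal.mem_span_singleton]

lemma qmk_lowdeg_inj (hℓ : 0 < ℓ) (f : F[X]) (hf : f.degree < (ℓ : ℕ))
    (h : qmk F ℓ f = 0) : f = 0 := by
  rw [qmk_eq_zero_iff] at h
  refine Polynomial.eq_zero_of_dvd_of_degree_lt h ?_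
  rwa [show ((X : F[X]) ^ ℓ - 1) = X ^ ℓ - C 1 by simp, Polynomial.degree_X_pow_sub_C hℓ]

lemma smul_eq_qmk_C (c : F) (x : CyclicQuot F ℓ) : c • x = qmk F ℓ (C c) * x := by
  obtain ⟨f, rfl⟩ := Ideal.Quotient.mk_surjective x
  simp only [qmk]
  rw [← map_mul, ← smul_eq_C_mul]
  exact (Submodule.Quotient.mk_smul _ c f)

end Aux

set_option maxHeartbeats 4000000 in
/-- suppose each `𝔭 i ∈ M` vanishes in coordinates `< i` and its `i`-th
coordinate generates `I_i` and is the image of a monic divisor `p i` of `y^ℓ - 1` of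
degree `a i`.  Then `dim_F M = Σ_i (ℓ - a_i)`. -/
theorem finrank_eq_sum (F : Type*) [Field F] [Fintype F] (s ℓ : ℕ)
    (hs : 0 < s) (hℓ : 0 < ℓ)
    (M : Submodule (CyclicQuot F ℓ) (Fin s → CyclicQuot F ℓ))
    (𝔭 : Fin s → Fin s → CyclicQuot F ℓ) (h𝔭M : ∀ i, 𝔭 i ∈ M)
    (h𝔭0 : ∀ i, ∀ j < i, 𝔭 i j = 0)
    (h𝔭gen : ∀ i, (Ideal.span {𝔭 i i} : Set (CyclicQuot F ℓ)) = sectionSet M i)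
    (p : Fin s → F[X]) (a : Fin s → ℕ)
    (hmonic : ∀ i, (p i).Monic) (hdeg : ∀ i, (p i).natDegree = a i)
    (hdvd : ∀ i, p i ∣ (X : F[X]) ^ ℓ - 1)
    (hdiag : ∀ i, 𝔭 i i = qmk F ℓ (p i)) :
    Module.finrank F (M.restrictScalars F) = ∑ i : Fin s, (ℓ - a i) := by
  classical
  -- the complementary divisors
  choose q hq using hdvd
  have hXl0 : ((X : F[X]) ^ ℓ - 1) ≠ 0 := by
    intro h
    have := Polynomial.degree_X_pow_sub_C hℓ (1 : F)
    rw [show ((X : F[X]) ^ ℓ - C 1) = X ^ ℓ - 1 by simp, h] at this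
    simp at this
  have hXlmonic : ((X : F[X]) ^ ℓ - 1).Monic := by
    have := Polynomial.monic_X_pow_sub_C (1 : F) hℓ.ne'
    simpa using this
  have hXldeg : ((X : F[X]) ^ ℓ - 1).natDegree = ℓ := by
    have := Polynomial.degree_X_pow_sub_C hℓ (1 : F)
    rw [show ((X : F[X]) ^ ℓ - C 1) = X ^ ℓ - 1 by simp] at this
    exact Polynomial.natDegree_eq_of_degree_eq_some this
  have haℓ : ∀ i, a i ≤ ℓ := by
    intro i
    rw [← hdeg i, ← hXldeg]
    exact Polynomial.natDegree_le_of_dvd ⟨q i, hq i⟩ hXl0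
  have hqmonic : ∀ i, (q i).Monic := by
    intro i
    exact (hmonic i).of_mul_monic_left (by rw [← hq i]; exact hXlmonic)
  have hqdeg : ∀ i, (q i).natDegree = ℓ - a i := by
    intro i
    have : (p i).natDegree + (q i).natDegree = ℓ := by
      rw [← Polynomial.natDegree_mul (hmonic i).ne_zero (hqmonic i).ne_zero, ← hq i, hXldeg]
    have := hdeg i
    omega
  -- the candidate basis family
  set b : ((i : Fin s) × Fin (ℓ - a i)) → (Fin s → CyclicQuot F ℓ) :=
    fun x => qmk F ℓ ((X : F[X]) ^ (x.2 : ℕ)) • 𝔭 x.1 with hb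
  -- Linear independence
  have hb_li : LinearIndependent F b := by
    rw [Fintype.linearIndependent_iff]
    intro g hg
    have key : ∀ n : ℕ, ∀ i : Fin s, (i : ℕ) < n → ∀ k, g ⟨i, k⟩ = 0 := by
      intro n
      induction n with
      | zero => intro i hi; omega
      | succ n ih =>
        intro i hi k
        rcases Nat.lt_or_ge (i : ℕ) n with h | h
        · exact ih i h k
        have hin : (i : ℕ) = n := by omega
        -- evaluate at coordinate i
        have hgi := congrFun hg i
        simp only [Finset.sum_apply, Pi.smul_apply, Pi.zero_apply] at hgi
        rw [← Finset.univ_sigma_univ, Finset.sum_sigma] at hgi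
        rw [Finset.sum_eq_single i] at hgi
        · -- the remaining sum
          set h' : F[X] := ∑ k' : Fin (ℓ - a i), C (g ⟨i, k'⟩) * X ^ (k' : ℕ) with hh'
          have hsum : qmk F ℓ (h' * p i) = 0 := by
            rw [← hgi]
            rw [map_mul, hh', map_sum, Finset.sum_mul]
            refine Finset.sum_congr rfl fun k' _ => ?_
            rw [hb]
            simp only [Pi.smul_apply]
            rw [hdiag i, smul_eq_mul, smul_eq_qmk_C]
            simp only [← map_mul]
            congr 1
            ring
          have hh0 : h' = 0 := by
            by_contra h0
            have hdegh : h'.natDegree < ℓ - a i := by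
              rw [Polynomial.natDegree_lt_iff_degree_lt h0]
              refine lt_of_le_of_lt (Polynomial.degree_sum_le _ _) ?_
              rw [Finset.sup_lt_iff (by exact WithBot.bot_lt_coe _)]
              intro k' _
              refine lt_of_le_of_lt (Polynomial.degree_C_mul_X_pow_le _ _) ?_
              exact_mod_cast WithBot.coe_lt_coe.mpr k'.isLt
            have hmul0 : h' * p i = 0 := by
              refine qmk_lowdeg_inj hℓ _ ?_ hsum
              have hne : h' * p i ≠ 0 := mul_ne_zero h0 (hmonic i).ne_zero
              rw [← Polynomial.natDegree_lt_iff_degree_lt hne]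
              rw [Polynomial.natDegree_mul h0 (hmonic i).ne_zero, hdeg i]
              have := haℓ i
              omega
            exact h0 (by
              rcases mul_eq_zero.mp hmul0 with h1 | h2
              · exact h1
              · exact absurd h2 (hmonic i).ne_zero)
          have := congrArg (fun P => Polynomial.coeff P (k : ℕ)) hh0
          simp only [hh', Polynomial.finset_sum_coeff, Polynomial.coeff_C_mul,
            Polynomial.coeff_X_pow, Polynomial.coeff_zero, mul_ite, mul_one, mul_zero,
            Fin.val_inj, Finset.sum_ite_eq, Finset.mem_univ, if_true] at this
          exact this
        · -- terms with i' ≠ i vanish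
          intro i' _ hne
          rcases lt_or_gt_of_ne hne with hlt | hgt
          · -- i' < i : coefficients vanish by ih
            refine Finset.sum_eq_zero fun k' _ => ?_
            rw [ih i' (by omega) k', zero_smul]
          · -- i' > i : 𝔭 i' i = 0
            refine Finset.sum_eq_zero fun k' _ => ?_
            rw [hb]
            simp only [Pi.smul_apply]
            rw [h𝔭0 i' i hgt]
            simp
        · intro hmem; exact absurd (Finset.mem_univ i) hmem
    intro x
    have := key s x.1 x.1.isLt x.2
    rwa [Sigma.eta] at this
  -- each basis vector lies in M
  have hbM : ∀ x, b x ∈ M := fun x => Submodule.smul_mem M _ (h𝔭M x.1)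
  -- multiples qmk r • 𝔭 i with deg r < ℓ - a i lie in the span
  have hsmul_span : ∀ (i : Fin s) (r : F[X]), r.natDegree < ℓ - a i ∨ r = 0 →
      qmk F ℓ r • 𝔭 i ∈ Submodule.span F (Set.range b) := by
    intro i r hr
    rcases hr with hr | rfl
    · rw [Polynomial.as_sum_range' r (ℓ - a i) hr, map_sum, Finset.sum_smul]
      refine Submodule.sum_mem _ fun k' hk' => ?_
      rw [← Polynomial.C_mul_X_pow_eq_monomial, map_mul, mul_smul]
      have hcs : (qmk F ℓ) (C (r.coeff k')) • ((qmk F ℓ) ((X : F[X]) ^ k') • 𝔭 i)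
          = (r.coeff k') • ((qmk F ℓ) ((X : F[X]) ^ k') • 𝔭 i) := by
        funext j
        simp only [Pi.smul_apply, smul_eq_mul]
        exact (smul_eq_qmk_C _ _).symm
      rw [hcs]
      refine Submodule.smul_mem _ _ ?_
      exact Submodule.subset_span ⟨⟨i, ⟨k', Finset.mem_range.mp hk'⟩⟩, rfl⟩
    · have hz : qmk F ℓ 0 • 𝔭 i = 0 := by
        rw [map_zero]; exact zero_smul (CyclicQuot F ℓ) (𝔭 i)
      rw [hz]
      exact Submodule.zero_mem _
  -- the key spanning induction
  have key : ∀ k : ℕ, ∀ v ∈ M, (∀ j : Fin s, (j : ℕ) < s - k → v j = 0) →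
      v ∈ Submodule.span F (Set.range b) := by
    intro k
    induction k with
    | zero =>
      intro v hv h0
      have : v = 0 := funext fun j => h0 j (by omega)
      rw [this]; exact Submodule.zero_mem _
    | succ k ih =>
      intro v hvM h0
      set i : Fin s := ⟨s - (k + 1), by omega⟩ with hi
      have hvi : v i ∈ sectionSet M i :=
        ⟨v, hvM, rfl, fun j hj => h0 j (by
          have : (j : ℕ) < (i : ℕ) := hj
          simp only [hi] at this
          omega)⟩
      rw [← h𝔭gen i] at hvi
      obtain ⟨c, hc⟩ := Ideal.mem_span_singleton'.mp hvi
      obtain ⟨gp, rfl⟩ := Ideal.Quotient.mk_surjective c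
      set r : F[X] := gp %ₘ q i with hr
      have hrdeg : r.natDegree < ℓ - a i ∨ r = 0 := by
        rcases eq_or_ne r 0 with h0' | h0'
        · exact Or.inr h0'
        · refine Or.inl ?_
          have hd := Polynomial.degree_modByMonic_lt gp (hqmonic i)
          rw [Polynomial.degree_eq_natDegree (hqmonic i).ne_zero, hqdeg i] at hd
          exact (Polynomial.natDegree_lt_iff_degree_lt h0').mpr hd
      have hw : v - qmk F ℓ r • 𝔭 i ∈ Submodule.span F (Set.range b) := by
        refine ih _ (Submodule.sub_mem M hvM (Submodule.smul_mem M _ (h𝔭M i))) ?_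
        intro j hj
        rcases Nat.lt_or_ge (j : ℕ) (s - (k + 1)) with hlt | hge
        · have hji : j < i := by
            rw [Fin.lt_def]; simpa [hi] using hlt
          rw [Pi.sub_apply, Pi.smul_apply, h0 j (by omega), h𝔭0 i j hji, smul_zero, sub_zero]
        · have hj_eq : j = i := by
            apply Fin.ext
            simp only [hi]
            omega
          subst hj_eq
          have hdvd2 : ((X : F[X]) ^ ℓ - 1) ∣ (gp * p i - r * p i) := by
            refine ⟨gp /ₘ q i, ?_⟩
            rw [hq i]
            have hmd := Polynomial.modByMonic_add_div gp (q i)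
            rw [← hr] at hmd
            linear_combination (-(p i)) * hmd
          rw [Pi.sub_apply, Pi.smul_apply, ← hc, hdiag i, smul_eq_mul]
          simp only [qmk, ← map_mul, ← map_sub]
          rw [Ideal.Quotient.eq_zero_iff_mem, Ideal.mem_span_singleton]
          exact hdvd2
      have hvsplit : v = (v - qmk F ℓ r • 𝔭 i) + qmk F ℓ r • 𝔭 i := by
        rw [sub_add_cancel]
      rw [hvsplit]
      exact Submodule.add_mem _ hw (hsmul_span i r hrdeg)
  have hspan : Submodule.span F (Set.range b) = M.restrictScalars F := by
    apply le_antisymm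
    · rw [Submodule.span_le]
      rintro _ ⟨x, rfl⟩
      exact hbM x
    · intro v hv
      exact key s v hv (fun j hj => by omega)
  rw [← hspan, finrank_span_eq_card hb_li]
  simp [Fintype.card_sigma, Fintype.card_fin]
end
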